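/- Dilation of Gabor type frames: Let λ ∈ ℂ with |λ| = 1, let U, V be unitary operators on a complex Hilbert space H with UV = λVU, and let η ∈ H be such that {U^m V^n η : m, n ∈ ℤ} is a normalized tight frame for H. Then there exist a complex Hilbert space H₁, an isometric linear embedding W : H → H₁, unitary operators U₁, V₁ on H₁ with U₁V₁ = λV₁U₁, and a vector ξ ∈ H₁ such that: (i) {U₁^m V₁^n ξ : m, n ∈ ℤ} is an orthonormal basis of H₁; (ii) W U = U₁ W and W V = V₁ W; (iii) the orthogonal projection P of H₁ onto the range of W commutes with U₁ and with V₁; (iv) P ξ = W η. In particular, P U₁^m V₁^n ξ = W U^m V^n η for all m, n ∈ ℤ. -/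

import Mathlib

open scoped InnerProductSpace ComplexOrder Classical
open Complex

noncomputable section

/-- A kernel `K : X × X → ℂ` is positive definite if every finite quadratic form
`∑ i j, K (x i) (x j) * ξ i * conj (ξ j)` is a nonnegative real number
(expressed via the partial order on `ℂ`). -/
def IsPosDefKernel {X : Type*} (K : X → X → ℂ) : Prop :=
  ∀ (n : ℕ) (x : Fin n → X) (ξ : Fin n → ℂ),
    0 ≤ ∑ i, ∑ j, K (x i) (x j) * ξ i * (starRingEnd ℂ) (ξ j)

/-- `(H, v)` is a Kolmogorov representation of the kernel `K`: the span of the range of `v`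
is dense and inner products of the `v x` reproduce `K`.  Mathlib's inner product is
conjugate-linear in the first variable, while the paper's is conjugate-linear in the second,
so the paper's `⟨v x, v y⟩ = K x y` reads `⟪v y, v x⟫_ℂ = K x y` here. -/
def IsKolmogorovRep {X : Type*} (K : X → X → ℂ) (H : Type*) [NormedAddCommGroup H]
    [InnerProductSpace ℂ H] (v : X → H) : Prop :=
  Dense (↑(Submodule.span ℂ (Set.range v)) : Set H) ∧
    ∀ x y : X, ⟪v y, v x⟫_ℂ = K x y

/-- `L² ≤ c K K'` in the sense of Dutkay. -/
def KernelSqLE {X : Type*} (L K K' : X → X → ℂ) (c : ℝ) : Prop :=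
  ∀ (m n : ℕ) (x : Fin m → X) (y : Fin n → X) (ξ : Fin m → ℂ) (η : Fin n → ℂ),
    ‖∑ i, ∑ j, L (x i) (y j) * ξ i * (starRingEnd ℂ) (η j)‖ ^ 2 ≤
      c * (∑ i, ∑ i', K (x i) (x i') * ξ i * (starRingEnd ℂ) (ξ i')).re *
        (∑ j, ∑ j', K' (y j) (y j') * η j * (starRingEnd ℂ) (η j')).re

/-- `K' ≤ c K` for kernels, via the partial order on `ℂ`. -/
def KernelLE {X : Type*} (K' K : X → X → ℂ) (c : ℝ) : Prop :=
  ∀ (n : ℕ) (x : Fin n → X) (ξ : Fin n → ℂ),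
    ∑ i, ∑ j, K' (x i) (x j) * ξ i * (starRingEnd ℂ) (ξ j) ≤
      (c : ℂ) * ∑ i, ∑ j, K (x i) (x j) * ξ i * (starRingEnd ℂ) (ξ j)

/-- A bounded operator is positive if `⟨S v, v⟩ ≥ 0` for all `v` (paper convention;
in Mathlib's convention this is `0 ≤ ⟪v, S v⟫`). -/
def IsPositiveOp {H : Type*} [NormedAddCommGroup H] [InnerProductSpace ℂ H]
    (S : H →L[ℂ] H) : Prop :=
  ∀ v : H, 0 ≤ ⟪v, S v⟫_ℂ

/-- A family of vectors is a normalized tight frame. -/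
def IsNormalizedTightFrame {H : Type*} [NormedAddCommGroup H] [InnerProductSpace ℂ H]
    {ι : Type*} (v : ι → H) : Prop :=
  ∀ f : H, ∑' i, ‖⟪v i, f⟫_ℂ‖ ^ 2 = ‖f‖ ^ 2

/-- `P` is the orthogonal projection onto the set `S`: idempotent, self-adjoint,
with range `S`. -/
def IsOrthProjectionOnto {H : Type*} [NormedAddCommGroup H] [InnerProductSpace ℂ H]
    (P : H →L[ℂ] H) (S : Set H) : Prop :=
  (∀ v, P (P v) = P v) ∧ (∀ v w : H, ⟪P v, w⟫_ℂ = ⟪v, P w⟫_ℂ) ∧ Set.range P = S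

/-- The two covariance relations for a Gabor-type kernel on `ℤ²`. -/
def GaborCovariant (lam : ℂ) (K : ℤ × ℤ → ℤ × ℤ → ℂ) : Prop :=
  (∀ m n m' n' : ℤ, K (m + 1, n) (m' + 1, n') = K (m, n) (m', n')) ∧
  (∀ m n m' n' : ℤ, K (m, n + 1) (m', n' + 1) = lam ^ (m - m') * K (m, n) (m', n'))

/-- The vectors `U^m V^n ξ₀` of a Gabor type unitary system. -/
def gaborVec {H : Type*} [NormedAddCommGroup H] [InnerProductSpace ℂ H] [CompleteSpace H]
    (U V : unitary (H →L[ℂ] H)) (ξ₀ : H) (p : ℤ × ℤ) : H :=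
  ((U ^ p.1 * V ^ p.2 : unitary (H →L[ℂ] H)) : H →L[ℂ] H) ξ₀

/-- `(H, U, V, ξ₀)` is the Gabor type cyclic system associated to the kernel `K` and the
unimodular scalar `lam` : `U V = lam V U`, the vectors `U^m V^n ξ₀` span a dense subspace,
and their inner products reproduce `K`. -/
def IsGaborSystem {H : Type*} [NormedAddCommGroup H] [InnerProductSpace ℂ H] [CompleteSpace H]
    (lam : ℂ) (K : ℤ × ℤ → ℤ × ℤ → ℂ) (U V : unitary (H →L[ℂ] H)) (ξ₀ : H) : Prop :=
  ((U : H →L[ℂ] H) * (V : H →L[ℂ] H) = lam • ((V : H →L[ℂ] H) * (U : H →L[ℂ] H))) ∧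
  Dense (↑(Submodule.span ℂ (Set.range (gaborVec U V ξ₀))) : Set H) ∧
  ∀ m n m' n' : ℤ,
    ⟪gaborVec U V ξ₀ (m', n'), gaborVec U V ξ₀ (m, n)⟫_ℂ = K (m, n) (m', n')

universe u

/-!
The analysis operator `W f = (⟪U^m V^n η, f⟫)_{(m,n)}` of the tight frame is an isometry of `H`
into `ℓ²(ℤ × ℤ)`. There the weighted shifts `U₁ δ_{(m,n)} = δ_{(m+1,n)}` and
`V₁ δ_{(m,n)} = conj λ ^ m • δ_{(m,n+1)}` satisfy `U₁ V₁ = λ V₁ U₁` and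
`U₁^m V₁^n δ_{(0,0)} = δ_{(m,n)}`.
The commutation relation gives `U⁻¹ (U^m V^n η) = U^(m-1) V^n η` and
`V⁻¹ (U^m V^n η) = λ^m U^m V^(n-1) η`, which read coordinatewise are `W U = U₁ W` and `W V = V₁ W`.
Hence `U₁` and `V₁` map `range W` onto itself and commute with the projection `P` onto it, and
`W* δ_{(m,n)} = U^m V^n η` says exactly that `P δ_{(m,n)} = W (U^m V^n η)`.
-/

open scoped lp

namespace Unitary

variable {E F : Type*} [NormedAddCommGroup E] [InnerProductSpace ℂ E] [CompleteSpace E]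
  [NormedAddCommGroup F] [InnerProductSpace ℂ F] [CompleteSpace F]

lemma inv_apply_apply (u : unitary (E →L[ℂ] E)) (x : E) :
    ((u⁻¹ : unitary (E →L[ℂ] E)) : E →L[ℂ] E) ((u : E →L[ℂ] E) x) = x := by
  change ((u⁻¹ * u : unitary (E →L[ℂ] E)) : E →L[ℂ] E) x = x
  rw [inv_mul_cancel]
  rfl

lemma inner_apply_eq_inner_inv_apply (u : unitary (E →L[ℂ] E)) (x y : E) :
    ⟪y, (u : E →L[ℂ] E) x⟫_ℂ = ⟪((u⁻¹ : unitary (E →L[ℂ] E)) : E →L[ℂ] E) y, x⟫_ℂ := by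
  rw [← Unitary.inner_map_map u⁻¹, inv_apply_apply]

lemma zpow_apply_of_apply_eq_succ (u : unitary (E →L[ℂ] E)) {x : ℤ → E}
    (h : ∀ k, (u : E →L[ℂ] E) (x k) = x (k + 1)) (m k : ℤ) :
    ((u ^ m : unitary (E →L[ℂ] E)) : E →L[ℂ] E) (x k) = x (k + m) := by
  induction m using Int.induction_on generalizing k with
  | zero => simp
  | succ m ih =>
    rw [zpow_add_one]
    change ((u ^ (m : ℤ) : unitary (E →L[ℂ] E)) : E →L[ℂ] E) ((u : E →L[ℂ] E) (x k)) = _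
    rw [h, ih, add_assoc, add_comm 1]
  | pred m ih =>
    have hinv : ((u⁻¹ : unitary (E →L[ℂ] E)) : E →L[ℂ] E) (x k) = x (k - 1) := by
      rw [← sub_add_cancel k 1, ← h, inv_apply_apply, add_sub_cancel_right]
    rw [zpow_sub_one]
    change ((u ^ (-(m : ℤ)) : unitary (E →L[ℂ] E)) : E →L[ℂ] E)
      (((u⁻¹ : unitary (E →L[ℂ] E)) : E →L[ℂ] E) (x k)) = _
    rw [hinv, ih, sub_add_eq_add_sub, add_sub_assoc]

lemma image_range_eq_of_semiconj {W : F → E} {T : unitary (F →L[ℂ] F)} {T₁ : unitary (E →L[ℂ] E)}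
    (h : ∀ x, W ((T : F →L[ℂ] F) x) = (T₁ : E →L[ℂ] E) (W x)) :
    (T₁ : E →L[ℂ] E) '' Set.range W = Set.range W := by
  rw [← Set.range_comp, ← (Unitary.linearIsometryEquiv T).surjective.range_comp W]
  exact congrArg Set.range (funext fun x => (h x).symm)

end Unitary

lemma mem_unitary_of_norm_eq_one {lam : ℂ} (hlam : ‖lam‖ = 1) : lam ∈ unitary ℂ := by
  rw [Unitary.mem_iff_star_mul_self, Complex.star_def, Complex.conj_mul', hlam]
  norm_num

lemma inv_mul_zpow_mul_zpow_of_mul_eq_mul {G : Type*} [Group G] {u v z : G}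
    (hzu : Commute z u) (hzv : Commute z v) (h : u * v = z * (v * u)) (m n : ℤ) :
    v⁻¹ * (u ^ m * v ^ n) = z ^ m * (u ^ m * v ^ (n - 1)) := by
  have hconj : v⁻¹ * u * v = z * u := by
    rw [mul_assoc, h, ← mul_assoc, ← hzv.inv_right.eq, mul_assoc, inv_mul_cancel_left]
  have hconj_zpow : v⁻¹ * u ^ m * v = z ^ m * u ^ m := by
    have := conj_zpow (a := v⁻¹) (b := u) (i := m)
    rwa [inv_inv, hconj, hzu.mul_zpow, eq_comm] at this
  calc v⁻¹ * (u ^ m * v ^ n) = v⁻¹ * u ^ m * v * v ^ (n - 1) := by group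
    _ = z ^ m * (u ^ m * v ^ (n - 1)) := by rw [hconj_zpow, mul_assoc]

namespace IsOrthProjectionOnto

variable {E : Type*} [NormedAddCommGroup E] [InnerProductSpace ℂ E] {P : E →L[ℂ] E} {S : Set E}

lemma apply_of_mem (hP : IsOrthProjectionOnto P S) {s : E} (hs : s ∈ S) : P s = s := by
  rw [← hP.2.2] at hs
  obtain ⟨w, rfl⟩ := hs
  exact hP.1 w

lemma inner_sub_apply_eq_zero (hP : IsOrthProjectionOnto P S) (w : E) {s : E} (hs : s ∈ S) :
    ⟪w - P w, s⟫_ℂ = 0 := by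
  rw [inner_sub_left, hP.2.1, hP.apply_of_mem hs, sub_self]

lemma apply_eq_of_mem_of_inner_sub_eq_zero (hP : IsOrthProjectionOnto P S) {w y : E}
    (hy : y ∈ S) (h : ∀ s ∈ S, ⟪w - y, s⟫_ℂ = 0) : P w = y := by
  have hmem : P (w - y) ∈ S := hP.2.2 ▸ Set.mem_range_self _
  have hzero : P (w - y) = 0 := by
    rw [← inner_self_eq_zero (𝕜 := ℂ), hP.2.1, hP.1]
    exact h _ hmem
  rwa [map_sub, hP.apply_of_mem hy, sub_eq_zero] at hzero

lemma commute_of_image_eq [CompleteSpace E] (hP : IsOrthProjectionOnto P S)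
    (T : unitary (E →L[ℂ] E)) (hT : (T : E →L[ℂ] E) '' S = S) (w : E) :
    P ((T : E →L[ℂ] E) w) = (T : E →L[ℂ] E) (P w) := by
  refine hP.apply_eq_of_mem_of_inner_sub_eq_zero ?_ ?_
  · exact hT ▸ Set.mem_image_of_mem _ (hP.2.2 ▸ Set.mem_range_self w)
  · rw [← hT]
    rintro _ ⟨s, hs, rfl⟩
    rw [← map_sub, Unitary.inner_map_map]
    exact hP.inner_sub_apply_eq_zero w hs

lemma apply_eq_of_forall_inner_eq {F : Type*} [NormedAddCommGroup F] [InnerProductSpace ℂ F]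
    {W : F →ₗᵢ[ℂ] E} (hP : IsOrthProjectionOnto P (Set.range W)) {y : E} {z : F}
    (h : ∀ x, ⟪y, W x⟫_ℂ = ⟪z, x⟫_ℂ) : P y = W z := by
  refine hP.apply_eq_of_mem_of_inner_sub_eq_zero ⟨z, rfl⟩ ?_
  rintro _ ⟨x, rfl⟩
  rw [inner_sub_left, h, W.inner_map_map, sub_self]

end IsOrthProjectionOnto

lemma memℓp_two_iff_summable_sq {ι : Type*} {E : ι → Type*} [∀ i, NormedAddCommGroup (E i)]
    {f : ∀ i, E i} : Memℓp f 2 ↔ Summable fun i => ‖f i‖ ^ 2 := by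
  rw [memℓp_gen_iff (by norm_num)]
  norm_num

lemma lp.norm_sq_eq_tsum {ι : Type*} {E : ι → Type*} [∀ i, NormedAddCommGroup (E i)]
    (f : lp E 2) : ‖f‖ ^ 2 = ∑' i, ‖f i‖ ^ 2 := by
  simpa using lp.norm_rpow_eq_tsum (p := 2) (by norm_num) f

namespace IsNormalizedTightFrame

variable {H : Type*} [NormedAddCommGroup H] [InnerProductSpace ℂ H] {ι : Type*} {v : ι → H}

lemma comp_equiv (hv : IsNormalizedTightFrame v) {ι' : Type*} (e : ι' ≃ ι) :
    IsNormalizedTightFrame (v ∘ e) :=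
  fun f => (e.tsum_eq fun i => ‖⟪v i, f⟫_ℂ‖ ^ 2).trans (hv f)

lemma summable (hv : IsNormalizedTightFrame v) (f : H) :
    Summable fun i => ‖⟪v i, f⟫_ℂ‖ ^ 2 := by
  by_contra hs
  have hf : f = 0 := by
    have := hv f
    rw [tsum_eq_zero_of_not_summable hs, eq_comm, sq_eq_zero_iff, norm_eq_zero] at this
    exact this
  simp [hf] at hs

def analysis (hv : IsNormalizedTightFrame v) : H →ₗᵢ[ℂ] ℓ²(ι, ℂ) where
  toFun f := ⟨fun i => ⟪v i, f⟫_ℂ, memℓp_two_iff_summable_sq.2 (hv.summable f)⟩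
  map_add' f g := lp.ext <| funext fun i => inner_add_right _ _ _
  map_smul' a f := lp.ext <| funext fun i => inner_smul_right _ _ _
  norm_map' f := by
    rw [← sq_eq_sq₀ (norm_nonneg _) (norm_nonneg _), lp.norm_sq_eq_tsum]
    exact hv f

@[simp]
lemma analysis_apply (hv : IsNormalizedTightFrame v) (f : H) (i : ι) :
    hv.analysis f i = ⟪v i, f⟫_ℂ :=
  rfl

end IsNormalizedTightFrame

section WeightedShift

variable {ι : Type*}

def weightedShiftₗᵢ (σ : ι ≃ ι) (c : ι → ℂ) (hc : ∀ i, ‖c i‖ = 1) :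
    ℓ²(ι, ℂ) →ₗᵢ[ℂ] ℓ²(ι, ℂ) where
  toFun g := ⟨fun i => c i * g (σ i), memℓp_two_iff_summable_sq.2 <| by
    simpa [Function.comp_def, norm_mul, hc] using
      σ.summable_iff.2 (memℓp_two_iff_summable_sq.1 g.2)⟩
  map_add' g h := lp.ext <| funext fun i => mul_add _ _ _
  map_smul' a g := lp.ext <| funext fun i => mul_left_comm _ _ _
  norm_map' g := by
    rw [← sq_eq_sq₀ (norm_nonneg _) (norm_nonneg _), lp.norm_sq_eq_tsum, lp.norm_sq_eq_tsum,
      ← σ.tsum_eq fun i => ‖g i‖ ^ 2]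
    simp [hc]

@[simp]
lemma weightedShiftₗᵢ_apply (σ : ι ≃ ι) (c : ι → ℂ) (hc : ∀ i, ‖c i‖ = 1)
    (g : ℓ²(ι, ℂ)) (i : ι) : weightedShiftₗᵢ σ c hc g i = c i * g (σ i) :=
  rfl

lemma weightedShiftₗᵢ_surjective (σ : ι ≃ ι) (c : ι → ℂ) (hc : ∀ i, ‖c i‖ = 1) :
    Function.Surjective (weightedShiftₗᵢ σ c hc) := by
  intro g
  refine ⟨weightedShiftₗᵢ σ.symm (fun i => (c (σ.symm i))⁻¹) (by simp [hc]) g, ?_⟩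
  ext i
  have hci : c i ≠ 0 := norm_ne_zero_iff.1 (by simp [hc])
  simp [hci]

def weightedShift (σ : ι ≃ ι) (c : ι → ℂ) (hc : ∀ i, ‖c i‖ = 1) :
    unitary (ℓ²(ι, ℂ) →L[ℂ] ℓ²(ι, ℂ)) :=
  Unitary.linearIsometryEquiv.symm
    (LinearIsometryEquiv.ofSurjective _ (weightedShiftₗᵢ_surjective σ c hc))

@[simp]
lemma weightedShift_apply (σ : ι ≃ ι) (c : ι → ℂ) (hc : ∀ i, ‖c i‖ = 1) (g : ℓ²(ι, ℂ))
    (i : ι) : ((weightedShift σ c hc : ℓ²(ι, ℂ) →L[ℂ] ℓ²(ι, ℂ)) g) i = c i * g (σ i) :=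
  rfl

lemma weightedShift_single [DecidableEq ι] (σ : ι ≃ ι) (c : ι → ℂ) (hc : ∀ i, ‖c i‖ = 1)
    (i : ι) (a : ℂ) :
    (weightedShift σ c hc : ℓ²(ι, ℂ) →L[ℂ] ℓ²(ι, ℂ)) (lp.single 2 i a) =
      lp.single 2 (σ.symm i) (c (σ.symm i) * a) := by
  ext j
  rcases eq_or_ne j (σ.symm i) with rfl | hj
  · simp
  · have hσj : σ j ≠ i := fun h => hj (σ.eq_symm_apply.2 h)
    simp [hj, hσj]

end WeightedShift

section GaborSystem

variable {H : Type*} [NormedAddCommGroup H] [InnerProductSpace ℂ H] [CompleteSpace H]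
  {U V : unitary (H →L[ℂ] H)} (η : H)

lemma inv_apply_gaborVec_fst (m n : ℤ) :
    ((U⁻¹ : unitary (H →L[ℂ] H)) : H →L[ℂ] H) (gaborVec U V η (m, n)) =
      gaborVec U V η (m - 1, n) := by
  change ((U⁻¹ * (U ^ m * V ^ n) : unitary (H →L[ℂ] H)) : H →L[ℂ] H) η = _
  rw [show U⁻¹ * (U ^ m * V ^ n) = U ^ (m - 1) * V ^ n by group]
  rfl

lemma inv_apply_gaborVec_snd {lam : ℂ} (hlam : ‖lam‖ = 1)
    (hUV : (U : H →L[ℂ] H) * (V : H →L[ℂ] H) = lam • ((V : H →L[ℂ] H) * (U : H →L[ℂ] H)))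
    (m n : ℤ) :
    ((V⁻¹ : unitary (H →L[ℂ] H)) : H →L[ℂ] H) (gaborVec U V η (m, n)) =
      lam ^ m • gaborVec U V η (m, n - 1) := by
  have hlam0 : lam ≠ 0 := norm_ne_zero_iff.1 (by simp [hlam])
  let z : unitary (H →L[ℂ] H) :=
    ⟨lam • 1, Unitary.smul_mem_of_mem (mem_unitary_of_norm_eq_one hlam) (one_mem _)⟩
  have hz_comm (g : unitary (H →L[ℂ] H)) : Commute z g :=
    Subtype.ext <| (smul_one_mul lam _).trans (mul_smul_one lam _).symm
  have hz_zpow (x : H) : ((z ^ m : unitary (H →L[ℂ] H)) : H →L[ℂ] H) x = lam ^ m • x := by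
    simpa using Unitary.zpow_apply_of_apply_eq_succ z (x := fun k => lam ^ k • x)
      (fun k => by simp [z, smul_smul, zpow_add_one₀ hlam0, mul_comm]) m 0
  have hUVz : U * V = z * (V * U) := Subtype.ext (hUV.trans (smul_one_mul lam _).symm)
  change ((V⁻¹ * (U ^ m * V ^ n) : unitary (H →L[ℂ] H)) : H →L[ℂ] H) η = _
  rw [inv_mul_zpow_mul_zpow_of_mul_eq_mul (hz_comm U) (hz_comm V) hUVz]
  exact hz_zpow _

lemma inner_gaborVec_apply_fst (m n : ℤ) (x : H) :
    ⟪gaborVec U V η (m, n), (U : H →L[ℂ] H) x⟫_ℂ = ⟪gaborVec U V η (m - 1, n), x⟫_ℂ := by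
  rw [Unitary.inner_apply_eq_inner_inv_apply, inv_apply_gaborVec_fst]

lemma inner_gaborVec_apply_snd {lam : ℂ} (hlam : ‖lam‖ = 1)
    (hUV : (U : H →L[ℂ] H) * (V : H →L[ℂ] H) = lam • ((V : H →L[ℂ] H) * (U : H →L[ℂ] H)))
    (m n : ℤ) (x : H) :
    ⟪gaborVec U V η (m, n), (V : H →L[ℂ] H) x⟫_ℂ =
      (starRingEnd ℂ) lam ^ m * ⟪gaborVec U V η (m, n - 1), x⟫_ℂ := by
  rw [Unitary.inner_apply_eq_inner_inv_apply, inv_apply_gaborVec_snd η hlam hUV, inner_smul_left,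
    map_zpow₀]

end GaborSystem

section GaborModel

-- `ℤ × ℤ` lifted to `Type u`, so that the dilation space lives in the universe of `H`.
abbrev GaborIndex : Type u := ULift.{u} (ℤ × ℤ)

def GaborIndex.shiftFst : GaborIndex.{u} ≃ GaborIndex.{u} where
  toFun j := ⟨(j.down.1 - 1, j.down.2)⟩
  invFun j := ⟨(j.down.1 + 1, j.down.2)⟩
  left_inv j := by simp
  right_inv j := by simp

def GaborIndex.shiftSnd : GaborIndex.{u} ≃ GaborIndex.{u} where
  toFun j := ⟨(j.down.1, j.down.2 - 1)⟩
  invFun j := ⟨(j.down.1, j.down.2 + 1)⟩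
  left_inv j := by simp
  right_inv j := by simp

abbrev GaborSpace : Type u := ℓ²(GaborIndex.{u}, ℂ)

variable (lam : ℂ) (hlam : ‖lam‖ = 1)

def gaborModelU : unitary (GaborSpace.{u} →L[ℂ] GaborSpace.{u}) :=
  weightedShift GaborIndex.shiftFst 1 fun _ => norm_one

def gaborModelV : unitary (GaborSpace.{u} →L[ℂ] GaborSpace.{u}) :=
  weightedShift GaborIndex.shiftSnd (fun j => (starRingEnd ℂ) lam ^ j.down.1)
    fun j => by simp [hlam]

def gaborModelVec : GaborSpace.{u} := lp.single 2 ⟨(0, 0)⟩ 1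

lemma gaborModelU_mul_gaborModelV :
    (gaborModelU.{u} : GaborSpace →L[ℂ] GaborSpace) *
        (gaborModelV lam hlam : GaborSpace →L[ℂ] GaborSpace) =
      lam • ((gaborModelV lam hlam : GaborSpace →L[ℂ] GaborSpace) *
        (gaborModelU : GaborSpace →L[ℂ] GaborSpace)) := by
  have hlam0 : (starRingEnd ℂ) lam ≠ 0 := by simp [← norm_ne_zero_iff, hlam]
  have hinv : ((starRingEnd ℂ) lam)⁻¹ = lam :=
    inv_eq_of_mul_eq_one_right (by rw [Complex.conj_mul', hlam]; norm_num)
  ext g ⟨m, n⟩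
  simp only [gaborModelU, gaborModelV, GaborIndex.shiftFst, GaborIndex.shiftSnd,
    mul_apply_eq_comp, smul_apply, weightedShift_apply, Equiv.coe_fn_mk, Pi.one_apply, one_mul,
    lp.coeFn_smul, Pi.smul_apply, smul_eq_mul, zpow_sub_one₀ hlam0, hinv]
  ring

lemma gaborVec_gaborModel (p : ℤ × ℤ) :
    gaborVec gaborModelU.{u} (gaborModelV lam hlam) gaborModelVec p =
      lp.single 2 (⟨p⟩ : GaborIndex.{u}) 1 := by
  obtain ⟨m, n⟩ := p
  have hV : ((gaborModelV lam hlam ^ n : unitary _) : GaborSpace.{u} →L[ℂ] GaborSpace)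
      gaborModelVec = lp.single 2 (⟨(0, n)⟩ : GaborIndex.{u}) 1 := by
    simpa [gaborModelVec] using Unitary.zpow_apply_of_apply_eq_succ (gaborModelV lam hlam)
      (x := fun k => lp.single 2 (⟨(0, k)⟩ : GaborIndex.{u}) 1)
      (fun k => by rw [gaborModelV, weightedShift_single]; simp [GaborIndex.shiftSnd]) n 0
  have hU : ((gaborModelU ^ m : unitary _) : GaborSpace.{u} →L[ℂ] GaborSpace)
      (lp.single 2 ⟨(0, n)⟩ 1) = lp.single 2 (⟨(m, n)⟩ : GaborIndex.{u}) 1 := by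
    simpa using Unitary.zpow_apply_of_apply_eq_succ gaborModelU.{u}
      (x := fun k => lp.single 2 (⟨(k, n)⟩ : GaborIndex.{u}) 1)
      (fun k => by rw [gaborModelU, weightedShift_single]; simp [GaborIndex.shiftFst]) m 0
  change ((gaborModelU ^ m : unitary _) : GaborSpace.{u} →L[ℂ] GaborSpace)
    (((gaborModelV lam hlam ^ n : unitary _) : GaborSpace →L[ℂ] GaborSpace) gaborModelVec) = _
  rw [hV, hU]

lemma gaborVec_gaborModel_eq_hilbertBasis :
    gaborVec gaborModelU.{u} (gaborModelV lam hlam) gaborModelVec =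
      (default : HilbertBasis GaborIndex.{u} ℂ GaborSpace.{u}) ∘ ULift.up := by
  ext1 p
  rw [gaborVec_gaborModel, Function.comp_apply, ← HilbertBasis.repr_symm_single]
  rfl

lemma orthonormal_gaborVec_gaborModel :
    Orthonormal ℂ (gaborVec gaborModelU.{u} (gaborModelV lam hlam) gaborModelVec) := by
  rw [gaborVec_gaborModel_eq_hilbertBasis]
  exact (HilbertBasis.orthonormal _).comp _ ULift.up_injective

lemma dense_span_gaborVec_gaborModel :
    Dense (Submodule.span ℂ (Set.range
      (gaborVec gaborModelU (gaborModelV lam hlam) gaborModelVec)) : Set GaborSpace.{u}) := by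
  rw [gaborVec_gaborModel_eq_hilbertBasis, ULift.up_surjective.range_comp,
    Submodule.dense_iff_topologicalClosure_eq_top]
  exact HilbertBasis.dense_span _

end GaborModel

/-- **Dilation of Gabor type frames.** A normalized tight frame `{U^m V^n η}` generated by a
Gabor type unitary system dilates to an orthonormal basis `{U₁^m V₁^n ξ}` generated by a
Gabor type unitary system with the same unimodular commutation scalar. -/
theorem gabor_frame_dilation (lam : ℂ) (hlam : ‖lam‖ = 1)
    {H : Type u} [NormedAddCommGroup H] [InnerProductSpace ℂ H] [CompleteSpace H]
    (U V : unitary (H →L[ℂ] H))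
    (hUV : (U : H →L[ℂ] H) * (V : H →L[ℂ] H) = lam • ((V : H →L[ℂ] H) * (U : H →L[ℂ] H)))
    (η : H) (hframe : IsNormalizedTightFrame (gaborVec U V η)) :
    ∃ (H₁ : Type u) (_ : NormedAddCommGroup H₁) (_ : InnerProductSpace ℂ H₁)
      (_ : CompleteSpace H₁) (W : H →ₗᵢ[ℂ] H₁) (U₁ V₁ : unitary (H₁ →L[ℂ] H₁)) (ξ : H₁),
      ((U₁ : H₁ →L[ℂ] H₁) * (V₁ : H₁ →L[ℂ] H₁) =
        lam • ((V₁ : H₁ →L[ℂ] H₁) * (U₁ : H₁ →L[ℂ] H₁))) ∧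
      (Orthonormal ℂ (gaborVec U₁ V₁ ξ) ∧
        Dense (↑(Submodule.span ℂ (Set.range (gaborVec U₁ V₁ ξ))) : Set H₁)) ∧
      (∀ x : H, W ((U : H →L[ℂ] H) x) = (U₁ : H₁ →L[ℂ] H₁) (W x)) ∧
      (∀ x : H, W ((V : H →L[ℂ] H) x) = (V₁ : H₁ →L[ℂ] H₁) (W x)) ∧
      (∀ P : H₁ →L[ℂ] H₁, IsOrthProjectionOnto P (Set.range W) →
        (∀ w : H₁, P ((U₁ : H₁ →L[ℂ] H₁) w) = (U₁ : H₁ →L[ℂ] H₁) (P w)) ∧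
        (∀ w : H₁, P ((V₁ : H₁ →L[ℂ] H₁) w) = (V₁ : H₁ →L[ℂ] H₁) (P w)) ∧
        P ξ = W η ∧
        ∀ m n : ℤ, P (gaborVec U₁ V₁ ξ (m, n)) = W (gaborVec U V η (m, n))) := by
  let W := (hframe.comp_equiv Equiv.ulift.{u}).analysis
  have hWU (x : H) : W ((U : H →L[ℂ] H) x) =
      (gaborModelU.{u} : GaborSpace.{u} →L[ℂ] GaborSpace.{u}) (W x) := by
    ext ⟨m, n⟩
    simp [W, gaborModelU, GaborIndex.shiftFst, inner_gaborVec_apply_fst]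
  have hWV (x : H) : W ((V : H →L[ℂ] H) x) =
      (gaborModelV lam hlam : GaborSpace.{u} →L[ℂ] GaborSpace.{u}) (W x) := by
    ext ⟨m, n⟩
    simp [W, gaborModelV, GaborIndex.shiftSnd, inner_gaborVec_apply_snd η hlam hUV]
  refine ⟨GaborSpace.{u}, inferInstance, inferInstance, inferInstance, W, gaborModelU,
    gaborModelV lam hlam, gaborModelVec, gaborModelU_mul_gaborModelV lam hlam,
    ⟨orthonormal_gaborVec_gaborModel lam hlam, dense_span_gaborVec_gaborModel lam hlam⟩, hWU, hWV,
    fun P hP => ?_⟩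
  have hPgabor (p : ℤ × ℤ) :
      P (gaborVec gaborModelU (gaborModelV lam hlam) gaborModelVec p) = W (gaborVec U V η p) :=
    hP.apply_eq_of_forall_inner_eq fun x => by
      rw [gaborVec_gaborModel, lp.inner_single_left]
      simp [W]
  refine ⟨hP.commute_of_image_eq _ (Unitary.image_range_eq_of_semiconj hWU),
    hP.commute_of_image_eq _ (Unitary.image_range_eq_of_semiconj hWV), ?_,
    fun m n => hPgabor (m, n)⟩
  simpa [gaborVec] using hPgabor (0, 0)
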